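/- (Graph growth by odd-parity projection.) Let G be a simple graph on Fin n and let A, B : Fin n be distinct, non-adjacent vertices of G. Let P⁻ be the odd-parity projector on qubits A, B, defined by (P⁻ f)(v) = f(v) if v A ≠ v B and 0 otherwise. Let G_f be the simple graph on Fin n with adjacency: vertices x, y ∉ {A, B} are adjacent in G_f iff they are adjacent in G; A and B are adjacent in G_f; B is adjacent to no vertex other than A; and A is adjacent to exactly those j ∉ {A, B} lying in the symmetric difference N_G(A) Δ N_G(B) of the neighbourhoods of A and B in G. Then P⁻ ψ_G = 2^{−1/2} • ((∏_{j ∈ N_G(B)} Z_j) ∘ X_B ∘ H_B) ψ_{G_f}. -/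

import Mathlib

open scoped BigOperators

noncomputable section

/-- The `n`-qubit state space. -/
abbrev V (n : ℕ) : Type := (Fin n → Bool) → ℂ

/-- The numeric value (0 or 1) of a bit. -/
def bval (b : Bool) : ℕ := if b then 1 else 0

/-- A diagonal (multiplication) operator on `V n`. -/
def diagOp {n : ℕ} (g : (Fin n → Bool) → ℂ) : V n →ₗ[ℂ] V n where
  toFun f := fun v => g v * f v
  map_add' f h := by funext v; simp [mul_add]
  map_smul' c f := by funext v; simp; ring

@[simp] lemma diagOp_apply {n : ℕ} (g : (Fin n → Bool) → ℂ) (f : V n) (v : Fin n → Bool) :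
    diagOp g f v = g v * f v := rfl

lemma diagOp_commute {n : ℕ} (g h : (Fin n → Bool) → ℂ) :
    Commute (diagOp g) (diagOp h) := by
  apply LinearMap.ext; intro f; funext v
  simp [Module.End.mul_apply]; ring

/-- The Pauli `Z` operator on qubit `i`. -/
def Zop {n : ℕ} (i : Fin n) : V n →ₗ[ℂ] V n :=
  diagOp (fun v => (-1 : ℂ) ^ bval (v i))

/-- The Pauli `X` operator on qubit `i`. -/
def Xop {n : ℕ} (i : Fin n) : V n →ₗ[ℂ] V n where
  toFun f := fun v => f (Function.update v i (!(v i)))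
  map_add' f h := by funext v; simp
  map_smul' c f := by funext v; simp

/-- The controlled-phase operator on qubits `i`, `j`. -/
def CZop {n : ℕ} (i j : Fin n) : V n →ₗ[ℂ] V n :=
  diagOp (fun v => (-1 : ℂ) ^ (bval (v i) * bval (v j)))

/-- The controlled-phase operator associated to an (unordered) edge. -/
def CZe {n : ℕ} : Sym2 (Fin n) → (V n →ₗ[ℂ] V n) :=
  Sym2.lift ⟨fun i j => CZop i j, by
    intro i j
    apply LinearMap.ext; intro f; funext v
    simp [CZop, Nat.mul_comm (bval (v i))]⟩

lemma CZe_commute {n : ℕ} (e e' : Sym2 (Fin n)) : Commute (CZe e) (CZe e') := by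
  induction e using Sym2.ind with
  | _ i j =>
    induction e' using Sym2.ind with
    | _ k l => simpa [CZe, CZop] using diagOp_commute _ _

/-- The `n`-qubit plus state `|+⟩^{⊗ n}`, the constant function `2^{-n/2}`. -/
def ePlus (n : ℕ) : V n := fun _ => (((2 : ℝ) ^ (-(n : ℝ) / 2) : ℝ) : ℂ)

/-- The graph state of a simple graph `G` on `Fin n`: the product of the
controlled-phase gates over all edges of `G`, applied to the plus state. -/
def graphState {n : ℕ} (G : SimpleGraph (Fin n)) [DecidableRel G.Adj] : V n :=
  (G.edgeFinset.noncommProd CZe (fun e _ e' _ _ => CZe_commute e e')) (ePlus n)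

/-- `true ∧ true` test for both endpoints of an edge, as a Boolean predicate on `Sym2`. -/
def edgeAllTrue {n : ℕ} (v : Fin n → Bool) : Sym2 (Fin n) → Bool :=
  Sym2.lift ⟨fun i j => v i && v j, by intro i j; exact Bool.and_comm _ _⟩

/-- `m_G(v)`: the number of edges of `G` both of whose endpoints `i` satisfy `v i = true`. -/
def mG {n : ℕ} (G : SimpleGraph (Fin n)) [DecidableRel G.Adj] (v : Fin n → Bool) : ℕ :=
  (G.edgeFinset.filter (fun e => edgeAllTrue v e = true)).card

lemma Zop_commute {n : ℕ} (j k : Fin n) : Commute (Zop j) (Zop k) :=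
  diagOp_commute _ _

/-- `2^{-1/2}` as a complex number. -/
def invSqrtTwo : ℂ := (((2 : ℝ) ^ (-(1 : ℝ) / 2) : ℝ) : ℂ)

/-- The Hadamard operator on qubit `i`. -/
def Hop {n : ℕ} (i : Fin n) : V n →ₗ[ℂ] V n where
  toFun f := fun v => invSqrtTwo *
    (f (Function.update v i false) + (-1 : ℂ) ^ bval (v i) * f (Function.update v i true))
  map_add' f h := by funext v; simp; ring
  map_smul' c f := by funext v; simp; ring

/-- The odd-parity projector on qubits `A`, `B`. -/
def Pminus {n : ℕ} (A B : Fin n) : V n →ₗ[ℂ] V n where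
  toFun f := fun v => if v A ≠ v B then f v else 0
  map_add' f h := by
    funext v; by_cases hv : v A = v B <;> simp [hv]
  map_smul' c f := by
    funext v; by_cases hv : v A = v B <;> simp [hv]

section Aux

variable {n : ℕ}

/-- The diagonal phase of a CZ gate, as a function of the edge. -/
def sgn (v : Fin n → Bool) : Sym2 (Fin n) → ℂ :=
  Sym2.lift ⟨fun i j => (-1 : ℂ) ^ (bval (v i) * bval (v j)), by
    intro i j; simp [Nat.mul_comm]⟩

@[simp] lemma sgn_mk (v : Fin n → Bool) (i j : Fin n) :
    sgn v s(i, j) = (-1 : ℂ) ^ (bval (v i) * bval (v j)) := rfl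

lemma CZe_eq_diag (e : Sym2 (Fin n)) : CZe e = diagOp (fun v => sgn v e) := by
  induction e using Sym2.ind with
  | _ i j => rfl

lemma noncommProd_diagOp {α : Type*} (s : Finset α) (g : α → (Fin n → Bool) → ℂ)
    (h : (↑s : Set α).Pairwise fun a b => Commute (diagOp (g a)) (diagOp (g b))) :
    s.noncommProd (fun a => diagOp (g a)) h = diagOp (fun v => ∏ a ∈ s, g a v) := by
  induction s using Finset.cons_induction with
  | empty =>
    simp only [Finset.noncommProd_empty]
    apply LinearMap.ext; intro f; funext v; simp
  | cons a s ha ih =>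
    rw [Finset.noncommProd_cons]
    rw [ih (h.mono (by simp [Set.subset_def]; tauto))]
    apply LinearMap.ext; intro f; funext v
    simp only [Module.End.mul_apply, diagOp_apply, Finset.prod_cons]
    ring

lemma graphState_apply (G : SimpleGraph (Fin n)) [DecidableRel G.Adj] (v : Fin n → Bool) :
    graphState G v = (∏ e ∈ G.edgeFinset, sgn v e) * ePlus n v := by
  unfold graphState
  rw [Finset.noncommProd_congr rfl (fun e _ => CZe_eq_diag e)
    (fun ⦃a⦄ ha ⦃b⦄ hb hab => CZe_commute a b)]
  erw [noncommProd_diagOp]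
  rfl

lemma sgn_congr {v w : Fin n → Bool} (e : Sym2 (Fin n)) (h : ∀ x ∈ e, v x = w x) :
    sgn v e = sgn w e := by
  induction e using Sym2.ind with
  | _ i j =>
    rw [sgn_mk, sgn_mk, h i (by simp), h j (by simp)]

lemma prod_incidence (G : SimpleGraph (Fin n)) [DecidableRel G.Adj] (a : Fin n)
    (f : Sym2 (Fin n) → ℂ) :
    ∏ e ∈ G.edgeFinset.filter (fun e => a ∈ e), f e
      = ∏ j ∈ G.neighborFinset a, f s(a, j) := by
  refine (Finset.prod_bij (fun j _ => s(a, j)) ?_ ?_ ?_ ?_).symm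
  · intro j hj
    rw [Finset.mem_filter, SimpleGraph.mem_edgeFinset, SimpleGraph.mem_edgeSet]
    exact ⟨(SimpleGraph.mem_neighborFinset _ _ _).mp hj, by simp⟩
  · intro j hj k hk hjk
    have hja : a ≠ j := ((SimpleGraph.mem_neighborFinset _ _ _).mp hj).ne
    rw [Sym2.eq_iff] at hjk
    rcases hjk with ⟨-, h⟩ | ⟨h, h'⟩
    · exact h
    · exact absurd h'.symm hja
  · intro e he
    rw [Finset.mem_filter] at he
    obtain ⟨b, rfl⟩ := Sym2.mem_iff_exists.mp he.2
    refine ⟨b, ?_, rfl⟩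
    rw [SimpleGraph.mem_neighborFinset]
    exact (SimpleGraph.mem_edgeSet _).mp (SimpleGraph.mem_edgeFinset.mp he.1)
  · intro j hj; rfl

lemma prod_symmdiff (s t : Finset (Fin n)) (f : Fin n → ℂ) (hf : ∀ j, f j * f j = 1) :
    ∏ j ∈ (s ∪ t) \ (s ∩ t), f j = (∏ j ∈ s, f j) * ∏ j ∈ t, f j := by
  have h1 : (∏ j ∈ s ∪ t, f j) * ∏ j ∈ s ∩ t, f j = (∏ j ∈ s, f j) * ∏ j ∈ t, f j :=
    Finset.prod_union_inter
  have h2 : (∏ j ∈ (s ∪ t) \ (s ∩ t), f j) * ∏ j ∈ s ∩ t, f j = ∏ j ∈ s ∪ t, f j :=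
    Finset.prod_sdiff (Finset.inter_subset_union)
  have h3 : (∏ j ∈ s ∩ t, f j) * ∏ j ∈ s ∩ t, f j = 1 := by
    rw [← Finset.prod_mul_distrib]
    exact Finset.prod_eq_one fun j _ => hf j
  calc ∏ j ∈ (s ∪ t) \ (s ∩ t), f j
      = (∏ j ∈ (s ∪ t) \ (s ∩ t), f j) * ((∏ j ∈ s ∩ t, f j) * ∏ j ∈ s ∩ t, f j) := by
        rw [h3, mul_one]
    _ = ((∏ j ∈ s ∪ t, f j) * ∏ j ∈ s ∩ t, f j) := by rw [← mul_assoc, h2]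
    _ = _ := h1

lemma invSqrtTwo_sq : invSqrtTwo * invSqrtTwo = 1 / 2 := by
  unfold invSqrtTwo
  rw [← Complex.ofReal_mul, ← Real.rpow_add (by norm_num)]
  norm_num

end Aux
section Aux2

variable {n : ℕ}

@[simp] lemma bval_true : bval true = 1 := rfl
@[simp] lemma bval_false : bval false = 0 := rfl

@[simp] lemma Xop_apply (i : Fin n) (f : V n) (v : Fin n → Bool) :
    Xop i f v = f (Function.update v i (!(v i))) := rfl

@[simp] lemma Hop_apply (i : Fin n) (f : V n) (v : Fin n → Bool) :
    Hop i f v = invSqrtTwo *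
      (f (Function.update v i false) + (-1 : ℂ) ^ bval (v i) * f (Function.update v i true)) := rfl

@[simp] lemma Pminus_apply (A B : Fin n) (f : V n) (v : Fin n → Bool) :
    Pminus A B f v = if v A ≠ v B then f v else 0 := rfl

lemma Zop_eq_diag (j : Fin n) :
    Zop j = diagOp (fun w => (-1 : ℂ) ^ bval (w j)) := rfl

lemma Zprod_apply (s : Finset (Fin n)) (f : V n) (v : Fin n → Bool) :
    (s.noncommProd Zop (fun j _ k _ _ => Zop_commute j k)) f v
      = (∏ j ∈ s, (-1 : ℂ) ^ bval (v j)) * f v := by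
  rw [Finset.noncommProd_congr rfl (fun j _ => Zop_eq_diag j)
    (fun ⦃a⦄ _ ⦃b⦄ _ _ => Zop_commute a b)]
  erw [noncommProd_diagOp]
  rfl

lemma neg_one_pow_mul_self (k : ℕ) : ((-1 : ℂ) ^ k) * ((-1 : ℂ) ^ k) = 1 := by
  rw [← pow_add]
  exact Even.neg_one_pow ⟨k, rfl⟩

end Aux2
/-- Graph growth by odd-parity projection: projecting the graph
state of `G` onto the odd-parity subspace of two distinct non-adjacent qubits
`A`, `B` yields (up to `2^{-1/2}` and the local unitary `𝒵_{N(B)} X_B H_B`) the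
graph state of the graph `G_f` in which `B` is a cherry attached to `A`, and `A`
gains the symmetric difference `N_G(A) Δ N_G(B)` as its other neighbours. -/
theorem parityProjection_graphGrowth {n : ℕ} (G Gf : SimpleGraph (Fin n))
    [DecidableRel G.Adj] [DecidableRel Gf.Adj] (A B : Fin n)
    (hAB : A ≠ B) (hnadj : ¬ G.Adj A B)
    (hOther : ∀ x y, x ≠ A → x ≠ B → y ≠ A → y ≠ B → (Gf.Adj x y ↔ G.Adj x y))
    (hABf : Gf.Adj A B)
    (hCherry : ∀ x, x ≠ A → ¬ Gf.Adj B x)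
    (hSymmDiff : ∀ j, j ≠ A → j ≠ B →
      (Gf.Adj A j ↔ ((G.Adj A j ∧ ¬ G.Adj B j) ∨ (¬ G.Adj A j ∧ G.Adj B j)))) :
    Pminus A B (graphState G) =
      invSqrtTwo • ((((G.neighborFinset B).noncommProd Zop
          (fun j _ k _ _ => Zop_commute j k)) ∘ₗ Xop B ∘ₗ Hop B) (graphState Gf)) := by
  classical
  set NA := G.neighborFinset A with hNAdef
  set NB := G.neighborFinset B with hNBdef
  set Δ : Finset (Fin n) := (NA ∪ NB) \ (NA ∩ NB) with hΔdef
  have hΔmem : ∀ j, j ∈ Δ ↔ ((G.Adj A j ∧ ¬ G.Adj B j) ∨ (¬ G.Adj A j ∧ G.Adj B j)) := by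
    intro j
    simp only [hΔdef, Finset.mem_sdiff, Finset.mem_union, Finset.mem_inter, hNAdef, hNBdef,
      SimpleGraph.mem_neighborFinset]
    tauto
  have hΔA : ∀ j ∈ Δ, j ≠ A := by
    intro j hj h
    rw [h] at hj
    rcases (hΔmem A).mp hj with ⟨h', -⟩ | ⟨-, h'⟩
    · exact G.irrefl h'
    · exact hnadj h'.symm
  have hΔB : ∀ j ∈ Δ, j ≠ B := by
    intro j hj h
    rw [h] at hj
    rcases (hΔmem B).mp hj with ⟨h', -⟩ | ⟨-, h'⟩
    · exact hnadj h'
    · exact G.irrefl h'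
  have hBnotΔ : B ∉ Δ := fun h => hΔB B h rfl
  have hNGfA : Gf.neighborFinset A = insert B Δ := by
    ext j
    rw [SimpleGraph.mem_neighborFinset, Finset.mem_insert, hΔmem]
    constructor
    · intro hadj
      by_cases hjB : j = B
      · exact Or.inl hjB
      · have hjA : j ≠ A := fun h => by subst h; exact Gf.irrefl hadj
        exact Or.inr ((hSymmDiff j hjA hjB).mp hadj)
    · rintro (rfl | hj)
      · exact hABf
      · have hj' : j ∈ Δ := (hΔmem j).mpr hj
        exact (hSymmDiff j (hΔA j hj') (hΔB j hj')).mpr hj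
  have hRest : Gf.edgeFinset.filter (fun e => ¬ A ∈ e)
      = G.edgeFinset.filter (fun e => ¬ A ∈ e ∧ ¬ B ∈ e) := by
    ext e
    induction e using Sym2.ind with
    | _ x y =>
      simp only [Finset.mem_filter, SimpleGraph.mem_edgeFinset, SimpleGraph.mem_edgeSet,
        Sym2.mem_iff, not_or]
      constructor
      · rintro ⟨hadj, hAx, hAy⟩
        have hxB : x ≠ B := by
          rintro rfl
          exact hCherry y (fun h => hAy h.symm) hadj
        have hyB : y ≠ B := by
          rintro rfl
          exact hCherry x (fun h => hAx h.symm) hadj.symm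
        refine ⟨(hOther x y (fun h => hAx h.symm) hxB (fun h => hAy h.symm) hyB).mp hadj,
          ⟨hAx, hAy⟩, fun h => hxB h.symm, fun h => hyB h.symm⟩
      · rintro ⟨hadj, ⟨hAx, hAy⟩, hBx, hBy⟩
        exact ⟨(hOther x y (fun h => hAx h.symm) (fun h => hBx h.symm)
          (fun h => hAy h.symm) (fun h => hBy h.symm)).mpr hadj, hAx, hAy⟩
  have hGBfilter : (G.edgeFinset.filter (fun e => ¬ A ∈ e)).filter (fun e => B ∈ e)
      = G.edgeFinset.filter (fun e => B ∈ e) := by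
    rw [Finset.filter_filter]
    ext e
    simp only [Finset.mem_filter]
    constructor
    · rintro ⟨he, -, hB⟩; exact ⟨he, hB⟩
    · rintro ⟨he, hBe⟩
      refine ⟨he, fun hAe => ?_, hBe⟩
      have := (Sym2.mem_and_mem_iff hAB).mp ⟨hAe, hBe⟩
      rw [this] at he
      exact hnadj ((SimpleGraph.mem_edgeSet G).mp (SimpleGraph.mem_edgeFinset.mp he))
  funext v
  simp only [Pi.smul_apply, smul_eq_mul, LinearMap.comp_apply, Pminus_apply, Xop_apply,
    Hop_apply, Zprod_apply, Function.update_idem, Function.update_self]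
  set PA := ∏ j ∈ NA, sgn v s(A, j) with hPAdef
  set PB := ∏ j ∈ NB, sgn v s(B, j) with hPBdef
  set D := ∏ j ∈ Δ, sgn v s(A, j) with hDdef
  set R := ∏ e ∈ G.edgeFinset.filter (fun e => ¬ A ∈ e ∧ ¬ B ∈ e), sgn v e with hRdef
  set ZB := ∏ j ∈ NB, (-1 : ℂ) ^ bval (v j) with hZBdef
  have hG : ∏ e ∈ G.edgeFinset, sgn v e = PA * (PB * R) := by
    rw [← Finset.prod_filter_mul_prod_filter_not G.edgeFinset (fun e => A ∈ e) (sgn v)]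
    congr 1
    · rw [prod_incidence]
    · rw [← Finset.prod_filter_mul_prod_filter_not
        (G.edgeFinset.filter (fun e => ¬ A ∈ e)) (fun e => B ∈ e) (sgn v),
        hGBfilter, prod_incidence, Finset.filter_filter]
  have hGf : ∀ b : Bool, (∏ e ∈ Gf.edgeFinset, sgn (Function.update v B b) e)
      = (-1 : ℂ) ^ (bval (v A) * bval b) * (D * R) := by
    intro b
    have h1 : ∏ e ∈ Gf.edgeFinset.filter (fun e => A ∈ e), sgn (Function.update v B b) e
        = (-1 : ℂ) ^ (bval (v A) * bval b) * D := by
      rw [prod_incidence, hNGfA, Finset.prod_insert hBnotΔ]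
      congr 1
      · rw [sgn_mk, Function.update_of_ne hAB, Function.update_self]
      · refine Finset.prod_congr rfl fun j hj => ?_
        rw [sgn_mk, sgn_mk, Function.update_of_ne hAB, Function.update_of_ne (hΔB j hj)]
    have h2 : ∏ e ∈ Gf.edgeFinset.filter (fun e => ¬ A ∈ e), sgn (Function.update v B b) e
        = R := by
      rw [hRest, hRdef]
      refine Finset.prod_congr rfl fun e he => ?_
      refine sgn_congr e fun x hx => ?_
      have hxB : x ≠ B := fun h => by
        subst h
        exact (Finset.mem_filter.mp he).2.2 hx
      exact Function.update_of_ne hxB b v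
    rw [← Finset.prod_filter_mul_prod_filter_not Gf.edgeFinset (fun e => A ∈ e)
      (sgn (Function.update v B b)), h1, h2, mul_assoc]
  have hEP0 : ePlus n (Function.update v B false) = ePlus n v := rfl
  have hEP1 : ePlus n (Function.update v B true) = ePlus n v := rfl
  rw [graphState_apply, graphState_apply, graphState_apply, hG, hGf, hGf, hEP0, hEP1]
  set c := ePlus n v with hcdef
  have hZB2 : ZB * ZB = 1 := by
    rw [hZBdef, ← Finset.prod_mul_distrib]
    exact Finset.prod_eq_one fun j _ => neg_one_pow_mul_self _
  have hi2 : invSqrtTwo * invSqrtTwo = 1 / 2 := invSqrtTwo_sq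
  cases hA : v A <;> cases hB : v B <;>
    simp only [bval_true, bval_false, Bool.not_true, Bool.not_false,
      Nat.mul_zero, Nat.zero_mul, Nat.mul_one, Nat.one_mul, pow_zero, pow_one, one_mul,
      ne_eq, not_true, not_false_iff, Bool.false_eq_true, Bool.true_eq_false,
      not_false_eq_true, not_true_eq_false, if_true, if_false, reduceIte]
  · -- v A = false, v B = false
    ring
  · -- v A = false, v B = true
    have hPA : PA = 1 := by
      rw [hPAdef]
      exact Finset.prod_eq_one fun j _ => by rw [sgn_mk, hA]; norm_num
    have hPB : PB = ZB := by
      rw [hPBdef, hZBdef]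
      exact Finset.prod_congr rfl fun j _ => by rw [sgn_mk, hB]; norm_num
    have hD : D = 1 := by
      rw [hDdef]
      exact Finset.prod_eq_one fun j _ => by rw [sgn_mk, hA]; norm_num
    rw [hPA, hPB, hD]
    linear_combination (-2 * ZB * R * c) * hi2
  · -- v A = true, v B = false
    have hsgnA : ∀ j : Fin n, sgn v s(A, j) = (-1 : ℂ) ^ bval (v j) := by
      intro j
      rw [sgn_mk, hA, bval_true, Nat.one_mul]
    have hPB : PB = 1 := by
      rw [hPBdef]
      exact Finset.prod_eq_one fun j _ => by rw [sgn_mk, hB]; norm_num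
    have hD : D = PA * ZB := by
      rw [hDdef, hPAdef, hZBdef, hΔdef]
      rw [Finset.prod_congr rfl fun j _ => hsgnA j]
      rw [prod_symmdiff NA NB _ (fun j => neg_one_pow_mul_self _)]
      congr 1
      exact (Finset.prod_congr rfl fun j _ => hsgnA j).symm
    rw [hPB, hD]
    linear_combination (-2 * ZB * ZB * PA * R * c) * hi2 -
      (PA * R * c) * hZB2
  · -- v A = true, v B = true
    ring
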